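/- Let α ∈ {1,−1} and let u, v : ℝ² → ℝ be smooth. Define Q(x,t) = Q(u(x,t), v(x,t)), and for k ∈ ℂ define U(x,t;k) = iαkΛ + Q and V(x,t;k) = 4iαk³Λ + 4k²Q + 2iαkΛ(Q² − Q_x) − Q_{xx} + Q_x Q − Q Q_x + 2Q³. Then the zero-curvature (compatibility) equation U_t − V_x + UV − VU = 0 holds at (x,t) for every k ∈ ℂ if and only if (u,v) satisfies the coupled mKdV system u_t + u_{xxx} − 3α(u_x v² + u v v_x + 2u² u_x) = 0 and v_t + v_{xxx} − 3α(u² v_x + u u_x v + 2v² v_x) = 0 at (x,t). Equivalently, the compatibility condition is the matrix equation Q_t + Q_{xxx} − 3(Q_x Q² + Q² Q_x) = 0. -/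

import Mathlib

open Matrix
open scoped ContDiff
set_option maxHeartbeats 1600000

/-- `Λ = diag(−1, 1, 1)`. -/
noncomputable def Lam : Matrix (Fin 3) (Fin 3) ℂ :=
  Matrix.diagonal ![(-1 : ℂ), 1, 1]

/-- The potential matrix `Q(u,v)` of the coupled mKdV Lax pair. -/
noncomputable def Qmat (α u v : ℝ) : Matrix (Fin 3) (Fin 3) ℂ :=
  !![0, (α : ℂ) * (u : ℂ), (α : ℂ) * (v : ℂ);
     (u : ℂ), 0, 0;
     (v : ℂ), 0, 0]

/-- Entrywise derivative of a matrix-valued function of one real variable. -/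
noncomputable def mderiv (F : ℝ → Matrix (Fin 3) (Fin 3) ℂ) (y : ℝ) :
    Matrix (Fin 3) (Fin 3) ℂ :=
  Matrix.of fun i j => deriv (fun z => F z i j) y

/-- The spatial slice `y ↦ Q(u(y,t), v(y,t))` at fixed time `t`. -/
noncomputable def Qslice (α : ℝ) (u v : ℝ → ℝ → ℝ) (t y : ℝ) :
    Matrix (Fin 3) (Fin 3) ℂ :=
  Qmat α (u y t) (v y t)

/-- The Lax matrix `U(x,t;k) = iαkΛ + Q(x,t)`. -/
noncomputable def Umat (α : ℝ) (u v : ℝ → ℝ → ℝ) (k : ℂ) (y s : ℝ) :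
    Matrix (Fin 3) (Fin 3) ℂ :=
  (Complex.I * (α : ℂ) * k) • Lam + Qmat α (u y s) (v y s)

/-- The Lax matrix
`V(x,t;k) = 4iαk³Λ + 4k²Q + 2iαkΛ(Q² − Q_x) − Q_{xx} + Q_x Q − Q Q_x + 2Q³`,
with all derivatives taken in the spatial variable at fixed time `t`. -/
noncomputable def Vmat (α : ℝ) (u v : ℝ → ℝ → ℝ) (k : ℂ) (t y : ℝ) :
    Matrix (Fin 3) (Fin 3) ℂ :=
  (4 * Complex.I * (α : ℂ) * k ^ 3) • Lam + (4 * k ^ 2) • Qslice α u v t y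
    + (2 * Complex.I * (α : ℂ) * k) •
        (Lam * (Qslice α u v t y * Qslice α u v t y - mderiv (Qslice α u v t) y))
    - mderiv (fun z => mderiv (Qslice α u v t) z) y
    + mderiv (Qslice α u v t) y * Qslice α u v t y
    - Qslice α u v t y * mderiv (Qslice α u v t) y
    + (2 : ℂ) • (Qslice α u v t y * Qslice α u v t y * Qslice α u v t y)

/-! ### Auxiliary infrastructure -/

/-- Entrywise `HasDerivAt` for a matrix valued function. -/
def HMD (F : ℝ → Matrix (Fin 3) (Fin 3) ℂ) (F' : Matrix (Fin 3) (Fin 3) ℂ) (y : ℝ) : Prop :=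
  ∀ i j, HasDerivAt (fun z => F z i j) (F' i j) y

namespace HMD

variable {F G : ℝ → Matrix (Fin 3) (Fin 3) ℂ} {F' G' : Matrix (Fin 3) (Fin 3) ℂ} {y : ℝ}

theorem mderiv_eq (h : HMD F F' y) : mderiv F y = F' := by
  ext i j
  simp only [mderiv, Matrix.of_apply]
  exact (h i j).deriv

theorem const (y : ℝ) (C : Matrix (Fin 3) (Fin 3) ℂ) : HMD (fun _ => C) 0 y := fun i j => by
  simpa using hasDerivAt_const y (C i j)

theorem add (hF : HMD F F' y) (hG : HMD G G' y) :
    HMD (fun z => F z + G z) (F' + G') y := fun i j => by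
  simpa using (hF i j).fun_add (hG i j)

theorem sub (hF : HMD F F' y) (hG : HMD G G' y) :
    HMD (fun z => F z - G z) (F' - G') y := fun i j => by
  simpa using (hF i j).fun_sub (hG i j)

theorem smul (hF : HMD F F' y) (c : ℂ) :
    HMD (fun z => c • F z) (c • F') y := fun i j => by
  simpa [Matrix.smul_apply, smul_eq_mul] using (hF i j).const_mul c

theorem mul (hF : HMD F F' y) (hG : HMD G G' y) :
    HMD (fun z => F z * G z) (F' * G y + F y * G') y := fun i j => by
  have h : HasDerivAt (fun z => ∑ l : Fin 3, F z i l * G z l j)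
      (∑ l : Fin 3, (F' i l * G y l j + F y i l * G' l j)) y :=
    HasDerivAt.fun_sum fun l _ => (hF i l).mul (hG l j)
  simpa [Matrix.mul_apply, Matrix.add_apply, Finset.sum_add_distrib] using h

theorem const_mul (A : Matrix (Fin 3) (Fin 3) ℂ) (hF : HMD F F' y) :
    HMD (fun z => A * F z) (A * F') y := fun i j => by
  have h : HasDerivAt (fun z => ∑ l : Fin 3, A i l * F z l j)
      (∑ l : Fin 3, A i l * F' l j) y :=
    HasDerivAt.fun_sum fun l _ => (hF l j).const_mul (A i l)
  simpa [Matrix.mul_apply] using h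

end HMD

theorem qmat_hmd {f g : ℝ → ℝ} {f' g' : ℝ} {y : ℝ} (α : ℝ)
    (hf : HasDerivAt f f' y) (hg : HasDerivAt g g' y) :
    HMD (fun z => Qmat α (f z) (g z)) (Qmat α f' g') y := by
  intro i j
  fin_cases i <;> fin_cases j <;>
    simp only [Qmat, Matrix.cons_val', Matrix.cons_val_zero, Matrix.cons_val_one,
      Matrix.head_cons, Matrix.empty_val', Matrix.cons_val_fin_one, Matrix.head_fin_const,
      Matrix.cons_val_two, Matrix.tail_cons, Matrix.of_apply, Fin.isValue] <;>
    first
      | exact hasDerivAt_const _ _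
      | exact hf.ofReal_comp
      | exact hg.ofReal_comp
      | exact (hf.ofReal_comp).const_mul _
      | exact (hg.ofReal_comp).const_mul _

/-! ### The abstract 3×3 matrix identity -/

noncomputable def Qc (a p q : ℂ) : Matrix (Fin 3) (Fin 3) ℂ :=
  !![0, a * p, a * q; p, 0, 0; q, 0, 0]

theorem Lam_eq : Lam = !![(-1 : ℂ), 0, 0; 0, 1, 0; 0, 0, 1] := by
  ext i j; fin_cases i <;> fin_cases j <;> rfl

theorem madd (a b c d e f g h i a' b' c' d' e' f' g' h' i' : ℂ) :
    !![a, b, c; d, e, f; g, h, i] + !![a', b', c'; d', e', f'; g', h', i'] =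
      !![a + a', b + b', c + c'; d + d', e + e', f + f'; g + g', h + h', i + i'] := by
  ext x y; fin_cases x <;> fin_cases y <;> rfl

theorem msub (a b c d e f g h i a' b' c' d' e' f' g' h' i' : ℂ) :
    !![a, b, c; d, e, f; g, h, i] - !![a', b', c'; d', e', f'; g', h', i'] =
      !![a - a', b - b', c - c'; d - d', e - e', f - f'; g - g', h - h', i - i'] := by
  ext x y; fin_cases x <;> fin_cases y <;> rfl

theorem msmul (r a b c d e f g h i : ℂ) :
    r • !![a, b, c; d, e, f; g, h, i] =
      !![r * a, r * b, r * c; r * d, r * e, r * f; r * g, r * h, r * i] := by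
  ext x y; fin_cases x <;> fin_cases y <;> rfl

theorem mzero : (0 : Matrix (Fin 3) (Fin 3) ℂ) = !![0, 0, 0; 0, 0, 0; 0, 0, 0] := by
  ext x y; fin_cases x <;> fin_cases y <;> rfl

theorem meq {a b c d e f g h i a' b' c' d' e' f' g' h' i' : ℂ}
    (h1 : a = a') (h2 : b = b') (h3 : c = c') (h4 : d = d') (h5 : e = e')
    (h6 : f = f') (h7 : g = g') (h8 : h = h') (h9 : i = i') :
    !![a, b, c; d, e, f; g, h, i] = !![a', b', c'; d', e', f'; g', h', i'] := by
  subst_vars; rfl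

theorem key (a : ℂ) (ha : a = 1 ∨ a = -1) (k p0 q0 p1 q1 p2 q2 p3 q3 pt qt : ℂ) :
    Qc a pt qt
      - (0 + (4 * k ^ 2) • Qc a p1 q1
          + (2 * Complex.I * a * k) •
              (Lam * (Qc a p1 q1 * Qc a p0 q0 + Qc a p0 q0 * Qc a p1 q1 - Qc a p2 q2))
          - Qc a p3 q3
          + (Qc a p2 q2 * Qc a p0 q0 + Qc a p1 q1 * Qc a p1 q1)
          - (Qc a p1 q1 * Qc a p1 q1 + Qc a p0 q0 * Qc a p2 q2)
          + (2 : ℂ) • ((Qc a p1 q1 * Qc a p0 q0 + Qc a p0 q0 * Qc a p1 q1) * Qc a p0 q0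
              + Qc a p0 q0 * Qc a p0 q0 * Qc a p1 q1))
      + ((Complex.I * a * k) • Lam + Qc a p0 q0) *
          ((4 * Complex.I * a * k ^ 3) • Lam + (4 * k ^ 2) • Qc a p0 q0
            + (2 * Complex.I * a * k) • (Lam * (Qc a p0 q0 * Qc a p0 q0 - Qc a p1 q1))
            - Qc a p2 q2 + Qc a p1 q1 * Qc a p0 q0 - Qc a p0 q0 * Qc a p1 q1
            + (2 : ℂ) • (Qc a p0 q0 * Qc a p0 q0 * Qc a p0 q0))
      - ((4 * Complex.I * a * k ^ 3) • Lam + (4 * k ^ 2) • Qc a p0 q0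
            + (2 * Complex.I * a * k) • (Lam * (Qc a p0 q0 * Qc a p0 q0 - Qc a p1 q1))
            - Qc a p2 q2 + Qc a p1 q1 * Qc a p0 q0 - Qc a p0 q0 * Qc a p1 q1
            + (2 : ℂ) • (Qc a p0 q0 * Qc a p0 q0 * Qc a p0 q0)) *
          ((Complex.I * a * k) • Lam + Qc a p0 q0)
    = Qc a pt qt + Qc a p3 q3
        - (3 : ℂ) • (Qc a p1 q1 * (Qc a p0 q0 * Qc a p0 q0)
            + Qc a p0 q0 * Qc a p0 q0 * Qc a p1 q1) := by
  have h1 : (4 * Complex.I * a * k ^ 3) = (-4 * a) * (Complex.I * k) ^ 3 := by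
    linear_combination (4 * a * Complex.I * k ^ 3) * Complex.I_sq
  have h2 : (4 * k ^ 2 : ℂ) = -4 * (Complex.I * k) ^ 2 := by
    linear_combination (4 * k ^ 2) * Complex.I_sq
  have h3 : (2 * Complex.I * a * k) = (2 * a) * (Complex.I * k) := by ring
  have h4 : (Complex.I * a * k) = a * (Complex.I * k) := by ring
  rw [h1, h2, h3, h4]
  generalize Complex.I * k = b
  simp only [Qc, Lam_eq, mzero, Matrix.mul_fin_three, madd, msub, msmul]
  apply meq <;> rcases ha with rfl | rfl <;> ring

/-! ### Derivative of the `V`-matrix, and the reduced zero-curvature identity -/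

theorem zc_final (α : ℝ) (hα : α = 1 ∨ α = -1) (k : ℂ)
    (f g f1 g1 f2 g2 f3 g3 : ℝ → ℝ)
    (hf : ∀ y, HasDerivAt f (f1 y) y) (hf1 : ∀ y, HasDerivAt f1 (f2 y) y)
    (hf2 : ∀ y, HasDerivAt f2 (f3 y) y)
    (hg : ∀ y, HasDerivAt g (g1 y) y) (hg1 : ∀ y, HasDerivAt g1 (g2 y) y)
    (hg2 : ∀ y, HasDerivAt g2 (g3 y) y)
    (x pt qt : ℝ) :
    Qmat α pt qt
      - mderiv (fun y =>
          (4 * Complex.I * (α : ℂ) * k ^ 3) • Lam + (4 * k ^ 2) • Qmat α (f y) (g y)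
            + (2 * Complex.I * (α : ℂ) * k) •
                (Lam * (Qmat α (f y) (g y) * Qmat α (f y) (g y) - Qmat α (f1 y) (g1 y)))
            - Qmat α (f2 y) (g2 y)
            + Qmat α (f1 y) (g1 y) * Qmat α (f y) (g y)
            - Qmat α (f y) (g y) * Qmat α (f1 y) (g1 y)
            + (2 : ℂ) • (Qmat α (f y) (g y) * Qmat α (f y) (g y) * Qmat α (f y) (g y))) x
      + ((Complex.I * (α : ℂ) * k) • Lam + Qmat α (f x) (g x)) *
          ((4 * Complex.I * (α : ℂ) * k ^ 3) • Lam + (4 * k ^ 2) • Qmat α (f x) (g x)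
            + (2 * Complex.I * (α : ℂ) * k) •
                (Lam * (Qmat α (f x) (g x) * Qmat α (f x) (g x) - Qmat α (f1 x) (g1 x)))
            - Qmat α (f2 x) (g2 x)
            + Qmat α (f1 x) (g1 x) * Qmat α (f x) (g x)
            - Qmat α (f x) (g x) * Qmat α (f1 x) (g1 x)
            + (2 : ℂ) • (Qmat α (f x) (g x) * Qmat α (f x) (g x) * Qmat α (f x) (g x)))
      - ((4 * Complex.I * (α : ℂ) * k ^ 3) • Lam + (4 * k ^ 2) • Qmat α (f x) (g x)
            + (2 * Complex.I * (α : ℂ) * k) •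
                (Lam * (Qmat α (f x) (g x) * Qmat α (f x) (g x) - Qmat α (f1 x) (g1 x)))
            - Qmat α (f2 x) (g2 x)
            + Qmat α (f1 x) (g1 x) * Qmat α (f x) (g x)
            - Qmat α (f x) (g x) * Qmat α (f1 x) (g1 x)
            + (2 : ℂ) • (Qmat α (f x) (g x) * Qmat α (f x) (g x) * Qmat α (f x) (g x))) *
          ((Complex.I * (α : ℂ) * k) • Lam + Qmat α (f x) (g x))
    = Qmat α pt qt + Qmat α (f3 x) (g3 x)
        - (3 : ℂ) • (Qmat α (f1 x) (g1 x) * (Qmat α (f x) (g x) * Qmat α (f x) (g x))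
            + Qmat α (f x) (g x) * Qmat α (f x) (g x) * Qmat α (f1 x) (g1 x)) := by
  have qm0 := qmat_hmd α (hf x) (hg x)
  have qm1 := qmat_hmd α (hf1 x) (hg1 x)
  have qm2 := qmat_hmd α (hf2 x) (hg2 x)
  have hd :=
    HMD.mderiv_eq
      (((((((HMD.const x ((4 * Complex.I * (α : ℂ) * k ^ 3) • Lam)).add
          (qm0.smul (4 * k ^ 2))).add
          ((HMD.const_mul Lam ((qm0.mul qm0).sub qm1)).smul (2 * Complex.I * (α : ℂ) * k))).sub
          qm2).add (qm1.mul qm0)).sub (qm0.mul qm1)).add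
          (((qm0.mul qm0).mul qm0).smul (2 : ℂ)))
  rw [hd]
  have ha' : ((α : ℂ) = 1 ∨ (α : ℂ) = -1) := by
    rcases hα with rfl | rfl
    · left; norm_num
    · right; norm_num
  exact key (α : ℂ) ha' k _ _ _ _ _ _ _ _ _ _

/-- for smooth `u, v`, the zero-curvature equation
`U_t − V_x + UV − VU = 0` at `(x,t)` holds for every `k ∈ ℂ` iff `(u,v)` satisfies
the coupled mKdV system at `(x,t)`; equivalently, the compatibility condition is
the matrix equation `Q_t + Q_{xxx} − 3(Q_x Q² + Q² Q_x) = 0`. -/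
theorem stmt16 (α : ℝ) (hα : α = 1 ∨ α = -1) (u v : ℝ → ℝ → ℝ)
    (hu : ContDiff ℝ (⊤ : ℕ∞) (fun p : ℝ × ℝ => u p.1 p.2))
    (hv : ContDiff ℝ (⊤ : ℕ∞) (fun p : ℝ × ℝ => v p.1 p.2))
    (x t : ℝ) :
    ((∀ k : ℂ,
        mderiv (fun s => Umat α u v k x s) t - mderiv (Vmat α u v k t) x
          + Umat α u v k x t * Vmat α u v k t x
          - Vmat α u v k t x * Umat α u v k x t = 0)
      ↔ (deriv (fun s => u x s) t + iteratedDeriv 3 (fun y => u y t) x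
          - 3 * α * (deriv (fun y => u y t) x * (v x t) ^ 2
            + u x t * v x t * deriv (fun y => v y t) x
            + 2 * (u x t) ^ 2 * deriv (fun y => u y t) x) = 0
        ∧ deriv (fun s => v x s) t + iteratedDeriv 3 (fun y => v y t) x
          - 3 * α * ((u x t) ^ 2 * deriv (fun y => v y t) x
            + u x t * deriv (fun y => u y t) x * v x t
            + 2 * (v x t) ^ 2 * deriv (fun y => v y t) x) = 0))
    ∧ ((∀ k : ℂ,
        mderiv (fun s => Umat α u v k x s) t - mderiv (Vmat α u v k t) x
          + Umat α u v k x t * Vmat α u v k t x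
          - Vmat α u v k t x * Umat α u v k x t = 0)
      ↔ mderiv (fun s => Qmat α (u x s) (v x s)) t
          + mderiv (fun y => mderiv (fun z => mderiv (Qslice α u v t) z) y) x
          - (3 : ℂ) • (mderiv (Qslice α u v t) x
              * (Qslice α u v t x * Qslice α u v t x)
            + (Qslice α u v t x * Qslice α u v t x)
              * mderiv (Qslice α u v t) x) = 0) := by
  -- smoothness of the slices
  have hu0 : ContDiff ℝ ∞ (fun y => u y t) :=
    (hu.of_le (by simp)).comp (contDiff_id.prodMk contDiff_const)
  have hv0 : ContDiff ℝ ∞ (fun y => v y t) :=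
    (hv.of_le (by simp)).comp (contDiff_id.prodMk contDiff_const)
  have hu1 : ContDiff ℝ ∞ (deriv (fun y => u y t)) := (contDiff_infty_iff_deriv.mp hu0).2
  have hv1 : ContDiff ℝ ∞ (deriv (fun y => v y t)) := (contDiff_infty_iff_deriv.mp hv0).2
  have hu2 : ContDiff ℝ ∞ (deriv (deriv (fun y => u y t))) := (contDiff_infty_iff_deriv.mp hu1).2
  have hv2 : ContDiff ℝ ∞ (deriv (deriv (fun y => v y t))) := (contDiff_infty_iff_deriv.mp hv1).2
  have hle : (1 : WithTop ℕ∞) ≤ ∞ := by exact_mod_cast (le_top : (1 : ℕ∞) ≤ ⊤)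
  have Hu0 : ∀ y, HasDerivAt (fun y => u y t) (deriv (fun y => u y t) y) y :=
    fun y => ((hu0.differentiable (zero_lt_one.trans_le hle).ne') y).hasDerivAt
  have Hv0 : ∀ y, HasDerivAt (fun y => v y t) (deriv (fun y => v y t) y) y :=
    fun y => ((hv0.differentiable (zero_lt_one.trans_le hle).ne') y).hasDerivAt
  have Hu1 : ∀ y, HasDerivAt (deriv (fun y => u y t)) (deriv (deriv (fun y => u y t)) y) y :=
    fun y => ((hu1.differentiable (zero_lt_one.trans_le hle).ne') y).hasDerivAt
  have Hv1 : ∀ y, HasDerivAt (deriv (fun y => v y t)) (deriv (deriv (fun y => v y t)) y) y :=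
    fun y => ((hv1.differentiable (zero_lt_one.trans_le hle).ne') y).hasDerivAt
  have Hu2 : ∀ y, HasDerivAt (deriv (deriv (fun y => u y t)))
      (deriv (deriv (deriv (fun y => u y t))) y) y :=
    fun y => ((hu2.differentiable (zero_lt_one.trans_le hle).ne') y).hasDerivAt
  have Hv2 : ∀ y, HasDerivAt (deriv (deriv (fun y => v y t)))
      (deriv (deriv (deriv (fun y => v y t))) y) y :=
    fun y => ((hv2.differentiable (zero_lt_one.trans_le hle).ne') y).hasDerivAt
  have Hut : HasDerivAt (fun s => u x s) (deriv (fun s => u x s) t) t :=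
    ((((hu.of_le (by simp)).comp (contDiff_const.prodMk contDiff_id)).differentiable (zero_lt_one.trans_le hle).ne') t).hasDerivAt
  have Hvt : HasDerivAt (fun s => v x s) (deriv (fun s => v x s) t) t :=
    ((((hv.of_le (by simp)).comp (contDiff_const.prodMk contDiff_id)).differentiable (zero_lt_one.trans_le hle).ne') t).hasDerivAt
  -- values of the various mderivs
  have hm1 : ∀ z, mderiv (Qslice α u v t) z
      = Qmat α (deriv (fun y => u y t) z) (deriv (fun y => v y t) z) :=
    fun z => (qmat_hmd α (Hu0 z) (Hv0 z)).mderiv_eq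
  have hm2 : ∀ z, mderiv (fun w =>
        Qmat α (deriv (fun y => u y t) w) (deriv (fun y => v y t) w)) z
      = Qmat α (deriv (deriv (fun y => u y t)) z) (deriv (deriv (fun y => v y t)) z) :=
    fun z => (qmat_hmd α (Hu1 z) (Hv1 z)).mderiv_eq
  have hm3 : ∀ z, mderiv (fun w =>
        Qmat α (deriv (deriv (fun y => u y t)) w) (deriv (deriv (fun y => v y t)) w)) z
      = Qmat α (deriv (deriv (deriv (fun y => u y t))) z)
          (deriv (deriv (deriv (fun y => v y t))) z) :=
    fun z => (qmat_hmd α (Hu2 z) (Hv2 z)).mderiv_eq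
  have hQt : mderiv (fun s => Qmat α (u x s) (v x s)) t
      = Qmat α (deriv (fun s => u x s) t) (deriv (fun s => v x s) t) :=
    (qmat_hmd α Hut Hvt).mderiv_eq
  have hUt : ∀ k : ℂ, mderiv (fun s => Umat α u v k x s) t
      = Qmat α (deriv (fun s => u x s) t) (deriv (fun s => v x s) t) := by
    intro k
    apply HMD.mderiv_eq
    intro i j
    have h1 := qmat_hmd α Hut Hvt i j
    have h2 := (hasDerivAt_const t (((Complex.I * (α : ℂ) * k) • Lam) i j)).fun_add h1
    simpa [Umat, Matrix.add_apply] using h2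
  have hVeq : ∀ k : ℂ, Vmat α u v k t = fun y =>
      (4 * Complex.I * (α : ℂ) * k ^ 3) • Lam + (4 * k ^ 2) • Qmat α (u y t) (v y t)
        + (2 * Complex.I * (α : ℂ) * k) •
            (Lam * (Qmat α (u y t) (v y t) * Qmat α (u y t) (v y t)
              - Qmat α (deriv (fun y => u y t) y) (deriv (fun y => v y t) y)))
        - Qmat α (deriv (deriv (fun y => u y t)) y) (deriv (deriv (fun y => v y t)) y)
        + Qmat α (deriv (fun y => u y t) y) (deriv (fun y => v y t) y)
            * Qmat α (u y t) (v y t)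
        - Qmat α (u y t) (v y t)
            * Qmat α (deriv (fun y => u y t) y) (deriv (fun y => v y t) y)
        + (2 : ℂ) • (Qmat α (u y t) (v y t) * Qmat α (u y t) (v y t)
            * Qmat α (u y t) (v y t)) := by
    intro k
    funext y
    simp only [Vmat, hm1, hm2, Qslice]
  -- the reduced form of the zero-curvature expression
  have hE : ∀ k : ℂ,
      mderiv (fun s => Umat α u v k x s) t - mderiv (Vmat α u v k t) x
          + Umat α u v k x t * Vmat α u v k t x
          - Vmat α u v k t x * Umat α u v k x t
        = mderiv (fun s => Qmat α (u x s) (v x s)) t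
          + mderiv (fun y => mderiv (fun z => mderiv (Qslice α u v t) z) y) x
          - (3 : ℂ) • (mderiv (Qslice α u v t) x
              * (Qslice α u v t x * Qslice α u v t x)
            + (Qslice α u v t x * Qslice α u v t x)
              * mderiv (Qslice α u v t) x) := by
    intro k
    rw [hVeq k, hUt k, hQt]
    simp only [hm1, hm2, hm3, Qslice, Umat]
    exact zc_final α hα k (fun y => u y t) (fun y => v y t)
      (deriv (fun y => u y t)) (deriv (fun y => v y t))
      (deriv (deriv (fun y => u y t))) (deriv (deriv (fun y => v y t)))
      (deriv (deriv (deriv (fun y => u y t)))) (deriv (deriv (deriv (fun y => v y t))))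
      Hu0 Hu1 Hu2 Hv0 Hv1 Hv2 x _ _
  have hiff2 : (∀ k : ℂ,
      mderiv (fun s => Umat α u v k x s) t - mderiv (Vmat α u v k t) x
        + Umat α u v k x t * Vmat α u v k t x
        - Vmat α u v k t x * Umat α u v k x t = 0)
      ↔ (mderiv (fun s => Qmat α (u x s) (v x s)) t
          + mderiv (fun y => mderiv (fun z => mderiv (Qslice α u v t) z) y) x
          - (3 : ℂ) • (mderiv (Qslice α u v t) x
              * (Qslice α u v t x * Qslice α u v t x)
            + (Qslice α u v t x * Qslice α u v t x)
              * mderiv (Qslice α u v t) x) = 0) :=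
    ⟨fun h => (hE 0).symm.trans (h 0), fun h k => (hE k).trans h⟩
  have hit : ∀ f : ℝ → ℝ, iteratedDeriv 3 f = deriv (deriv (deriv f)) := by
    intro f
    simp [iteratedDeriv_succ, iteratedDeriv_zero]
  have hRR : mderiv (fun s => Qmat α (u x s) (v x s)) t
      + mderiv (fun y => mderiv (fun z => mderiv (Qslice α u v t) z) y) x
      - (3 : ℂ) • (mderiv (Qslice α u v t) x * (Qslice α u v t x * Qslice α u v t x)
          + (Qslice α u v t x * Qslice α u v t x) * mderiv (Qslice α u v t) x)
      = Qmat α (deriv (fun s => u x s) t) (deriv (fun s => v x s) t)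
        + Qmat α (deriv (deriv (deriv (fun y => u y t))) x)
            (deriv (deriv (deriv (fun y => v y t))) x)
        - (3 : ℂ) • (Qmat α (deriv (fun y => u y t) x) (deriv (fun y => v y t) x)
              * (Qmat α (u x t) (v x t) * Qmat α (u x t) (v x t))
            + (Qmat α (u x t) (v x t) * Qmat α (u x t) (v x t))
              * Qmat α (deriv (fun y => u y t) x) (deriv (fun y => v y t) x)) := by
    rw [hQt]
    simp only [hm1, hm2, hm3, Qslice]
  have hsc : (mderiv (fun s => Qmat α (u x s) (v x s)) t
      + mderiv (fun y => mderiv (fun z => mderiv (Qslice α u v t) z) y) x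
      - (3 : ℂ) • (mderiv (Qslice α u v t) x * (Qslice α u v t x * Qslice α u v t x)
          + (Qslice α u v t x * Qslice α u v t x) * mderiv (Qslice α u v t) x) = 0)
      ↔ (deriv (fun s => u x s) t + iteratedDeriv 3 (fun y => u y t) x
          - 3 * α * (deriv (fun y => u y t) x * (v x t) ^ 2
            + u x t * v x t * deriv (fun y => v y t) x
            + 2 * (u x t) ^ 2 * deriv (fun y => u y t) x) = 0
        ∧ deriv (fun s => v x s) t + iteratedDeriv 3 (fun y => v y t) x
          - 3 * α * ((u x t) ^ 2 * deriv (fun y => v y t) x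
            + u x t * deriv (fun y => u y t) x * v x t
            + 2 * (v x t) ^ 2 * deriv (fun y => v y t) x) = 0) := by
    rw [hRR, hit, hit]
    constructor
    · intro h
      have h10 : (Qmat α (deriv (fun s => u x s) t) (deriv (fun s => v x s) t)
          + Qmat α (deriv (deriv (deriv (fun y => u y t))) x)
              (deriv (deriv (deriv (fun y => v y t))) x)
          - (3 : ℂ) • (Qmat α (deriv (fun y => u y t) x) (deriv (fun y => v y t) x)
                * (Qmat α (u x t) (v x t) * Qmat α (u x t) (v x t))
              + (Qmat α (u x t) (v x t) * Qmat α (u x t) (v x t))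
                * Qmat α (deriv (fun y => u y t) x) (deriv (fun y => v y t) x))) 1 0 = 0 := by
        rw [h]; simp
      have h20 : (Qmat α (deriv (fun s => u x s) t) (deriv (fun s => v x s) t)
          + Qmat α (deriv (deriv (deriv (fun y => u y t))) x)
              (deriv (deriv (deriv (fun y => v y t))) x)
          - (3 : ℂ) • (Qmat α (deriv (fun y => u y t) x) (deriv (fun y => v y t) x)
                * (Qmat α (u x t) (v x t) * Qmat α (u x t) (v x t))
              + (Qmat α (u x t) (v x t) * Qmat α (u x t) (v x t))
                * Qmat α (deriv (fun y => u y t) x) (deriv (fun y => v y t) x))) 2 0 = 0 := by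
        rw [h]; simp
      simp [Qmat, Matrix.mul_apply, Fin.sum_univ_three, Matrix.add_apply,
        Matrix.sub_apply, Matrix.smul_apply, smul_eq_mul] at h10 h20
      constructor
      · have hc : ((deriv (fun s => u x s) t + deriv (deriv (deriv (fun y => u y t))) x
            - 3 * α * (deriv (fun y => u y t) x * (v x t) ^ 2
              + u x t * v x t * deriv (fun y => v y t) x
              + 2 * (u x t) ^ 2 * deriv (fun y => u y t) x) : ℝ) : ℂ) = 0 := by
          push_cast
          linear_combination h10
        exact_mod_cast hc
      · have hc : ((deriv (fun s => v x s) t + deriv (deriv (deriv (fun y => v y t))) x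
            - 3 * α * ((u x t) ^ 2 * deriv (fun y => v y t) x
              + u x t * deriv (fun y => u y t) x * v x t
              + 2 * (v x t) ^ 2 * deriv (fun y => v y t) x) : ℝ) : ℂ) = 0 := by
          push_cast
          linear_combination h20
        exact_mod_cast hc
    · rintro ⟨h1, h2⟩
      have h1c : ((deriv (fun s => u x s) t + deriv (deriv (deriv (fun y => u y t))) x
          - 3 * α * (deriv (fun y => u y t) x * (v x t) ^ 2
            + u x t * v x t * deriv (fun y => v y t) x
            + 2 * (u x t) ^ 2 * deriv (fun y => u y t) x) : ℝ) : ℂ) = 0 := by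
        exact_mod_cast congrArg (fun r : ℝ => (r : ℂ)) h1
      have h2c : ((deriv (fun s => v x s) t + deriv (deriv (deriv (fun y => v y t))) x
          - 3 * α * ((u x t) ^ 2 * deriv (fun y => v y t) x
            + u x t * deriv (fun y => u y t) x * v x t
            + 2 * (v x t) ^ 2 * deriv (fun y => v y t) x) : ℝ) : ℂ) = 0 := by
        exact_mod_cast congrArg (fun r : ℝ => (r : ℂ)) h2
      push_cast at h1c h2c
      ext i j
      fin_cases i <;> fin_cases j <;>
        simp [Qmat, Matrix.mul_apply, Fin.sum_univ_three, Matrix.add_apply,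
          Matrix.sub_apply, Matrix.smul_apply, smul_eq_mul] <;>
        first
          | ring1
          | linear_combination h1c
          | linear_combination h2c
          | linear_combination (α : ℂ) * h1c
          | linear_combination (α : ℂ) * h2c
  exact ⟨hiff2.trans hsc, hiff2⟩
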